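/- The functor L : Lab → Volt (sending (G,Γ,β) to (G,Γ,α) with α(d) = β(s(d))⁻¹β(t(d))) is left adjoint to the functor R : Volt → Lab sending (G,Γ,α) to the pullback graph G ×_{ℓ(Γ)} K̊(Γ) (over the cospan α : G → ℓ(Γ), q_Γ : K̊(Γ) → ℓ(Γ)) labeled by the projection to K̊(Γ). -/

import Mathlib

/-! The unit sends a vertex `v` to `(v, β v)` and a dart `d` to `(d, (β (s d), β (t d)))`, which
lies over `d` precisely because `L` gives `d` the voltage `β (s d)⁻¹ * β (t d)`; the counit is the
projection of the pullback onto `G`. Both use the identity of `Γ`, so the triangle identities and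
the naturality of the counit hold definitionally, and the naturality of the unit is the
compatibility of a morphism of labeled graphs with the labels. -/

open CategoryTheory

structure DGraph where
  V : Type
  D : Type
  s : D → V
  t : D → V
  inv : D → D
  inv_inv : ∀ d, inv (inv d) = d
  s_inv : ∀ d, s (inv d) = t d

@[ext]
structure GraphHom (G H : DGraph) where
  fV : G.V → H.V
  fD : G.D → H.D
  map_s : ∀ d, H.s (fD d) = fV (G.s d)
  map_t : ∀ d, H.t (fD d) = fV (G.t d)
  map_inv : ∀ d, H.inv (fD d) = fD (G.inv d)

instance : Category DGraph where
  Hom := GraphHom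
  id G := ⟨id, id, fun _ => rfl, fun _ => rfl, fun _ => rfl⟩
  comp f g := ⟨g.fV ∘ f.fV, g.fD ∘ f.fD,
    fun d => by simp [g.map_s, f.map_s],
    fun d => by simp [g.map_t, f.map_t],
    fun d => by simp [g.map_inv, f.map_inv]⟩


/-- A group labeled graph: a graph with vertices labeled by elements of a group. -/
structure Lab where
  G : DGraph
  Γ : Type
  [grp : Group Γ]
  β : G.V → Γ

attribute [instance] Lab.grp

/-- A morphism of group labeled graphs. -/
structure LabHom (X Y : Lab) where
  f : GraphHom X.G Y.G
  h : X.Γ →* Y.Γ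
  compat : ∀ v, h (X.β v) = Y.β (f.fV v)

/-- The category of group labeled graphs. -/
instance : Category Lab where
  Hom := LabHom
  id X := ⟨⟨id, id, fun _ => rfl, fun _ => rfl, fun _ => rfl⟩, MonoidHom.id _, fun _ => rfl⟩
  comp φ ψ :=
    ⟨⟨ψ.f.fV ∘ φ.f.fV, ψ.f.fD ∘ φ.f.fD,
      fun d => by simp [ψ.f.map_s, φ.f.map_s],
      fun d => by simp [ψ.f.map_t, φ.f.map_t],
      fun d => by simp [ψ.f.map_inv, φ.f.map_inv]⟩,
     ψ.h.comp φ.h,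
     fun v => by simp [φ.compat, ψ.compat]⟩

/-- A voltage graph: a graph with darts labeled by elements of a group,
compatibly with the dart-reversing involution. -/
structure Volt where
  G : DGraph
  Γ : Type
  [grp : Group Γ]
  α : G.D → Γ
  volt : ∀ d, α (G.inv d) = (α d)⁻¹

attribute [instance] Volt.grp

/-- A morphism of voltage graphs. -/
structure VoltHom (X Y : Volt) where
  f : GraphHom X.G Y.G
  h : X.Γ →* Y.Γ
  compat : ∀ d, h (X.α d) = Y.α (f.fD d)

/-- The category of voltage graphs. -/
instance : Category Volt where
  Hom := VoltHom
  id X := ⟨⟨id, id, fun _ => rfl, fun _ => rfl, fun _ => rfl⟩, MonoidHom.id _, fun _ => rfl⟩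
  comp φ ψ :=
    ⟨⟨ψ.f.fV ∘ φ.f.fV, ψ.f.fD ∘ φ.f.fD,
      fun d => by simp [ψ.f.map_s, φ.f.map_s],
      fun d => by simp [ψ.f.map_t, φ.f.map_t],
      fun d => by simp [ψ.f.map_inv, φ.f.map_inv]⟩,
     ψ.h.comp φ.h,
     fun d => by simp [φ.compat, ψ.compat]⟩

lemma DGraph.t_inv (G : DGraph) (d : G.D) : G.t (G.inv d) = G.s d := by
  conv_rhs => rw [← G.inv_inv d]
  rw [G.s_inv]

/-- The functor `L : Lab → Volt`, assigning to a labeling `β` the voltage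
`α(d) = β(s(d))⁻¹ · β(t(d))`. -/
def L : Lab ⥤ Volt where
  obj X :=
    { G := X.G
      Γ := X.Γ
      α := fun d => (X.β (X.G.s d))⁻¹ * X.β (X.G.t d)
      volt := fun d => by try dsimp only
                          rw [X.G.s_inv, X.G.t_inv]; simp [mul_inv_rev] }
  map φ :=
    ⟨φ.f, φ.h, fun d => by
      dsimp only
      rw [φ.f.map_s, φ.f.map_t, ← φ.compat, ← φ.compat, map_mul, map_inv]⟩

/-- The pullback graph `G ×_{ℓ(Γ)} K̊(Γ)` of a voltage graph. -/
def pbGraph (X : Volt) : DGraph where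
  V := X.G.V × X.Γ
  D := {p : X.G.D × (X.Γ × X.Γ) // p.2.1⁻¹ * p.2.2 = X.α p.1}
  s := fun d => (X.G.s d.val.1, d.val.2.1)
  t := fun d => (X.G.t d.val.1, d.val.2.2)
  inv := fun d => ⟨(X.G.inv d.val.1, (d.val.2.2, d.val.2.1)), by
    rw [X.volt, ← d.prop]; simp [mul_inv_rev]⟩
  inv_inv := fun d => Subtype.ext (Prod.ext (X.G.inv_inv _) rfl)
  s_inv := fun d => Prod.ext (X.G.s_inv _) rfl

/-- The functor `R : Volt → Lab`, sending a voltage graph to the pullback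
graph `G ×_{ℓ(Γ)} K̊(Γ)` labeled by the projection to `K̊(Γ)`. -/
def R : Volt ⥤ Lab where
  obj X :=
    { G := pbGraph X
      Γ := X.Γ
      β := fun p => p.2 }
  map {X Y} φ :=
    ⟨⟨fun p => (φ.f.fV p.1, φ.h p.2),
      fun d => ⟨(φ.f.fD d.val.1, (φ.h d.val.2.1, φ.h d.val.2.2)), by
        rw [← map_inv, ← map_mul, d.prop, φ.compat]⟩,
      fun d => Prod.ext (φ.f.map_s _) rfl,
      fun d => Prod.ext (φ.f.map_t _) rfl,
      fun d => Subtype.ext (Prod.ext (φ.f.map_inv _) rfl)⟩,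
     φ.h, fun _ => rfl⟩

@[ext]
lemma LabHom.ext {X Y : Lab} {φ ψ : X ⟶ Y} (hf : φ.f = ψ.f) (hh : φ.h = ψ.h) : φ = ψ := by
  change LabHom X Y at φ ψ
  cases φ; cases ψ; congr

def labUnit (X : Lab) : X ⟶ R.obj (L.obj X) where
  f :=
    { fV := fun v => (v, X.β v)
      fD := fun d => ⟨(d, (X.β (X.G.s d), X.β (X.G.t d))), rfl⟩
      map_s := fun _ => rfl
      map_t := fun _ => rfl
      map_inv := fun d => by
        refine Subtype.ext (Prod.ext rfl (Prod.ext ?_ ?_))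
        · exact congrArg X.β (X.G.s_inv d).symm
        · exact congrArg X.β (X.G.t_inv d).symm }
  h := MonoidHom.id _
  compat := fun _ => rfl

def voltCounit (Y : Volt) : L.obj (R.obj Y) ⟶ Y where
  f :=
    { fV := Prod.fst
      fD := fun d => d.val.1
      map_s := fun _ => rfl
      map_t := fun _ => rfl
      map_inv := fun _ => rfl }
  h := MonoidHom.id _
  compat := fun d => d.prop

lemma labUnit_naturality {X Y : Lab} (φ : X ⟶ Y) :
    φ ≫ labUnit Y = labUnit X ≫ R.map (L.map φ) := by
  ext
  · exact Prod.ext rfl (φ.compat _).symm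
  · refine Subtype.ext (Prod.ext rfl (Prod.ext ?_ ?_))
    · exact (congrArg Y.β (φ.f.map_s _)).trans (φ.compat _).symm
    · exact (congrArg Y.β (φ.f.map_t _)).trans (φ.compat _).symm
  · rfl

lemma voltCounit_naturality {X Y : Volt} (φ : X ⟶ Y) :
    L.map (R.map φ) ≫ voltCounit Y = voltCounit X ≫ φ :=
  rfl

lemma L_map_labUnit_comp_voltCounit (X : Lab) :
    L.map (labUnit X) ≫ voltCounit (L.obj X) = 𝟙 (L.obj X) :=
  rfl

lemma labUnit_comp_R_map_voltCounit (Y : Volt) :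
    labUnit (R.obj Y) ≫ R.map (voltCounit Y) = 𝟙 (R.obj Y) :=
  rfl

/-- `L` is left adjoint to `R`. -/
theorem L_adj_R : Nonempty (L ⊣ R) :=
  ⟨{ unit := { app := labUnit, naturality := fun _ _ φ => labUnit_naturality φ }
     counit := { app := voltCounit, naturality := fun _ _ φ => voltCounit_naturality φ }
     left_triangle_components := L_map_labUnit_comp_voltCounit
     right_triangle_components := labUnit_comp_R_map_voltCounit }⟩
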